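/- For each j = 0, 1, …, N−1, the one-column partition function W̃_j has the closed form W̃_j(u₁,…,u_N|v_M|a₁₂) = ([a₁₂ + M − 1 + j − u_{N−j} + v_M]/[a₁₂ + M − 1 + j]) · ∏_{k=N−j+1}^{N} ( [u_k − v_M][a₂₁ − M + k − N] / ([1][a₂₁ − M + 1 + k − N]) ) · ∏_{k=1}^{N−j−1} ([1 − u_k + v_M]/[1]), where a₂₁ = −a₁₂. -/
import Mathlib


open Complex

noncomputable section

/-- The half period magnitude `K₁` for elliptic nome `q`. -/
def Kone (q : ℝ) : ℝ :=
  Real.pi / 2 * ∏' n : ℕ,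
    ((1 + q ^ (2 * n + 1)) / (1 - q ^ (2 * n + 1)) *
      ((1 - q ^ (2 * n + 2)) / (1 + q ^ (2 * n + 2)))) ^ 2

/-- The half period magnitude `K₂` for elliptic nome `q`. -/
def Ktwo (q : ℝ) : ℝ := -(Kone q / Real.pi) * Real.log q

/-- The elliptic theta function `H`. -/
def theta (q : ℝ) (u : ℂ) : ℂ :=
  2 * (q : ℂ) ^ (1 / 4 : ℂ) * Complex.sin (Real.pi * u / (2 * (Kone q : ℂ))) *
    ∏' n : ℕ,
      ((1 - 2 * (q : ℂ) ^ (2 * n + 2) * Complex.cos (Real.pi * u / (Kone q : ℂ)) +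
          (q : ℂ) ^ (4 * n + 4)) * (1 - (q : ℂ) ^ (2 * n + 2)))

/-- The bracket `[u] = H(λu)`. -/
def brak (q : ℝ) (lam : ℂ) (u : ℂ) : ℂ := theta q (lam * u)

/-- Unit vector ê₁. -/
def e1 : ℤ × ℤ := (1, 0)

/-- Unit vector ê₂. -/
def e2 : ℤ × ℤ := (0, 1)

/-- The scalar `a₁₂ = a₁ + a₂ + ω₁₂` attached to a state vector. -/
def aSc (ω12 : ℂ) (a : ℤ × ℤ) : ℂ := (a.1 : ℂ) + (a.2 : ℂ) + ω12

/-- The face weights of the Deguchi-Martin model. -/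
def faceW (q : ℝ) (lam ω12 : ℂ) (a b c d : ℤ × ℤ) (u v : ℂ) : ℂ :=
  if b = a + e1 ∧ c = a + e1 ∧ d = a + e1 + e1 then
    brak q lam (1 + (u - v)) / brak q lam 1
  else if b = a + e2 ∧ c = a + e2 ∧ d = a + e2 + e2 then
    brak q lam (1 - (u - v)) / brak q lam 1
  else if b = a + e2 ∧ c = a + e1 ∧ d = a + e1 + e2 then
    brak q lam (u - v) * brak q lam (aSc ω12 a - 1) / (brak q lam 1 * brak q lam (aSc ω12 a))
  else if b = a + e1 ∧ c = a + e2 ∧ d = a + e1 + e2 then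
    brak q lam (u - v) * brak q lam (-aSc ω12 a - 1) / (brak q lam 1 * brak q lam (-aSc ω12 a))
  else if b = a + e1 ∧ c = a + e1 ∧ d = a + e1 + e2 then
    brak q lam (aSc ω12 a - (u - v)) / brak q lam (aSc ω12 a)
  else if b = a + e2 ∧ c = a + e2 ∧ d = a + e1 + e2 then
    brak q lam (-aSc ω12 a - (u - v)) / brak q lam (-aSc ω12 a)
  else 0

/-- The one-column partition function `W̃_j(u₁,…,u_N|v_M|a₁₂)` defined as a product of
face weights (the shaded column of the decomposition of the partition function). -/
def oneCol (q : ℝ) (lam ω12 : ℂ) (M N : ℕ) (u : ℕ → ℂ) (vM : ℂ) (a : ℤ × ℤ)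
    (j : ℕ) : ℂ :=
  (∏ k ∈ Finset.range j,
    faceW q lam ω12
      (a + ((M : ℤ) - 1) • e1 + (k : ℤ) • e2)
      (a + (M : ℤ) • e1 + (k : ℤ) • e2)
      (a + ((M : ℤ) - 1) • e1 + ((k : ℤ) + 1) • e2)
      (a + (M : ℤ) • e1 + ((k : ℤ) + 1) • e2)
      (u (N - k)) vM) *
  faceW q lam ω12
    (a + ((M : ℤ) - 1) • e1 + (j : ℤ) • e2)
    (a + (M : ℤ) • e1 + (j : ℤ) • e2)
    (a + (M : ℤ) • e1 + (j : ℤ) • e2)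
    (a + (M : ℤ) • e1 + ((j : ℤ) + 1) • e2)
    (u (N - j)) vM *
  ∏ k ∈ Finset.Ico j (N - 1),
    faceW q lam ω12
      (a + (M : ℤ) • e1 + (k : ℤ) • e2)
      (a + (M : ℤ) • e1 + ((k : ℤ) + 1) • e2)
      (a + (M : ℤ) • e1 + ((k : ℤ) + 1) • e2)
      (a + (M : ℤ) • e1 + ((k : ℤ) + 2) • e2)
      (u (N - k - 1)) vM

section
variable (q : ℝ) (lam ω12 : ℂ)

lemma aSc_add_smul (a : ℤ × ℤ) (m k : ℤ) :
    aSc ω12 (a + m • e1 + k • e2) = aSc ω12 a + (m : ℂ) + (k : ℂ) := by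
  simp [aSc, e1, e2, Prod.smul_def]
  ring

lemma faceW_11 (a : ℤ × ℤ) (u v : ℂ) :
    faceW q lam ω12 a (a + e1) (a + e1) (a + e1 + e2) u v =
      brak q lam (aSc ω12 a - (u - v)) / brak q lam (aSc ω12 a) := by
  rw [faceW, if_neg, if_neg, if_neg, if_neg, if_pos] <;>
    simp [e1, e2, Prod.ext_iff]

lemma faceW_22 (a : ℤ × ℤ) (u v : ℂ) :
    faceW q lam ω12 a (a + e2) (a + e2) (a + e2 + e2) u v =
      brak q lam (1 - (u - v)) / brak q lam 1 := by
  rw [faceW, if_neg, if_pos] <;> simp [e1, e2, Prod.ext_iff]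

lemma faceW_12 (a : ℤ × ℤ) (u v : ℂ) :
    faceW q lam ω12 a (a + e1) (a + e2) (a + e1 + e2) u v =
      brak q lam (u - v) * brak q lam (-aSc ω12 a - 1) /
        (brak q lam 1 * brak q lam (-aSc ω12 a)) := by
  rw [faceW, if_neg, if_neg, if_neg, if_pos] <;> simp [e1, e2, Prod.ext_iff]

end

section
variable (q : ℝ) (lam ω12 : ℂ)

lemma vec1 (a : ℤ × ℤ) (m k : ℤ) :
    a + m • e1 + k • e2 = (a + (m - 1) • e1 + k • e2) + e1 := by
  simp [e1, e2, Prod.ext_iff, Prod.smul_def]; omega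

lemma vec2 (a : ℤ × ℤ) (m k : ℤ) :
    a + (m - 1) • e1 + (k + 1) • e2 = (a + (m - 1) • e1 + k • e2) + e2 := by
  simp [e1, e2, Prod.ext_iff, Prod.smul_def]; omega

lemma vec3 (a : ℤ × ℤ) (m k : ℤ) :
    a + m • e1 + (k + 1) • e2 = (a + (m - 1) • e1 + k • e2) + e1 + e2 := by
  simp [e1, e2, Prod.ext_iff, Prod.smul_def]; omega

lemma vec4 (a : ℤ × ℤ) (m k : ℤ) :
    a + m • e1 + (k + 1) • e2 = (a + m • e1 + k • e2) + e2 := by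
  simp [e1, e2, Prod.ext_iff, Prod.smul_def]; omega

lemma vec5 (a : ℤ × ℤ) (m k : ℤ) :
    a + m • e1 + (k + 2) • e2 = (a + m • e1 + (k + 1) • e2) + e2 := by
  simp [e1, e2, Prod.ext_iff, Prod.smul_def]; omega

lemma fw_col1 (a : ℤ × ℤ) (m k : ℤ) (u v : ℂ) :
    faceW q lam ω12 (a + (m - 1) • e1 + k • e2) (a + m • e1 + k • e2)
      (a + (m - 1) • e1 + (k + 1) • e2) (a + m • e1 + (k + 1) • e2) u v =
      brak q lam (u - v) * brak q lam (-(aSc ω12 a + (m : ℂ) - 1 + (k : ℂ)) - 1) /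
        (brak q lam 1 * brak q lam (-(aSc ω12 a + (m : ℂ) - 1 + (k : ℂ)))) := by
  have h := faceW_12 q lam ω12 (a + (m - 1) • e1 + k • e2) u v
  rw [← vec3, ← vec2, ← vec1, aSc_add_smul] at h
  rw [h]
  push_cast
  ring_nf

lemma fw_col2 (a : ℤ × ℤ) (m k : ℤ) (u v : ℂ) :
    faceW q lam ω12 (a + (m - 1) • e1 + k • e2) (a + m • e1 + k • e2)
      (a + m • e1 + k • e2) (a + m • e1 + (k + 1) • e2) u v =
      brak q lam ((aSc ω12 a + (m : ℂ) - 1 + (k : ℂ)) - (u - v)) /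
        brak q lam (aSc ω12 a + (m : ℂ) - 1 + (k : ℂ)) := by
  have h := faceW_11 q lam ω12 (a + (m - 1) • e1 + k • e2) u v
  rw [← vec3, ← vec1, aSc_add_smul] at h
  rw [h]
  push_cast
  ring_nf

lemma fw_col3 (a : ℤ × ℤ) (m k : ℤ) (u v : ℂ) :
    faceW q lam ω12 (a + m • e1 + k • e2) (a + m • e1 + (k + 1) • e2)
      (a + m • e1 + (k + 1) • e2) (a + m • e1 + (k + 2) • e2) u v =
      brak q lam (1 - (u - v)) / brak q lam 1 := by
  rw [vec5, vec4]
  exact faceW_22 q lam ω12 (a + m • e1 + k • e2) u v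

end

/-- for each `j = 0,1,…,N-1` the one-column partition function has the
closed form
`W̃_j = ([a₁₂+M-1+j-u_{N-j}+v_M]/[a₁₂+M-1+j])
  · ∏_{k=N-j+1}^N ([u_k-v_M][a₂₁-M+k-N]/([1][a₂₁-M+1+k-N]))
  · ∏_{k=1}^{N-j-1} ([1-u_k+v_M]/[1])`, where `a₂₁ = -a₁₂`. -/
theorem statement10 (q : ℝ) (hq0 : 0 < q) (hq1 : q < 1) (lam : ℂ) (hlam : lam ≠ 0)
    (ω12 : ℂ) (M N : ℕ) (hN : 1 ≤ N) (hNM : N ≤ M)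
    (u : ℕ → ℂ) (vM : ℂ) (a : ℤ × ℤ)
    (hbr1 : brak q lam 1 ≠ 0)
    (hbrA : ∀ b : ℤ × ℤ, brak q lam (aSc ω12 b) ≠ 0)
    (hbrA' : ∀ b : ℤ × ℤ, brak q lam (-aSc ω12 b) ≠ 0)
    (j : ℕ) (hj : j < N) :
    oneCol q lam ω12 M N u vM a j =
      brak q lam (aSc ω12 a + (M : ℂ) - 1 + (j : ℂ) - u (N - j) + vM) /
        brak q lam (aSc ω12 a + (M : ℂ) - 1 + (j : ℂ)) *
      (∏ k ∈ Finset.Icc (N - j + 1) N,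
        brak q lam (u k - vM) * brak q lam (-aSc ω12 a - (M : ℂ) + (k : ℂ) - (N : ℂ)) /
          (brak q lam 1 * brak q lam (-aSc ω12 a - (M : ℂ) + 1 + (k : ℂ) - (N : ℂ)))) *
      ∏ k ∈ Finset.Icc 1 (N - j - 1), brak q lam (1 - u k + vM) / brak q lam 1 := by
  unfold oneCol
  have hmid : faceW q lam ω12
      (a + ((M : ℤ) - 1) • e1 + (j : ℤ) • e2)
      (a + (M : ℤ) • e1 + (j : ℤ) • e2)
      (a + (M : ℤ) • e1 + (j : ℤ) • e2)
      (a + (M : ℤ) • e1 + ((j : ℤ) + 1) • e2)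
      (u (N - j)) vM =
      brak q lam (aSc ω12 a + (M : ℂ) - 1 + (j : ℂ) - u (N - j) + vM) /
        brak q lam (aSc ω12 a + (M : ℂ) - 1 + (j : ℂ)) := by
    rw [fw_col2]
    push_cast
    ring_nf
  have hp1 : (∏ k ∈ Finset.range j,
      faceW q lam ω12
        (a + ((M : ℤ) - 1) • e1 + (k : ℤ) • e2)
        (a + (M : ℤ) • e1 + (k : ℤ) • e2)
        (a + ((M : ℤ) - 1) • e1 + ((k : ℤ) + 1) • e2)
        (a + (M : ℤ) • e1 + ((k : ℤ) + 1) • e2)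
        (u (N - k)) vM) =
      ∏ k ∈ Finset.Icc (N - j + 1) N,
        brak q lam (u k - vM) * brak q lam (-aSc ω12 a - (M : ℂ) + (k : ℂ) - (N : ℂ)) /
          (brak q lam 1 * brak q lam (-aSc ω12 a - (M : ℂ) + 1 + (k : ℂ) - (N : ℂ))) := by
    refine Finset.prod_nbij' (fun k => N - k) (fun k => N - k) ?_ ?_ ?_ ?_ ?_
    · intro k hk; simp only [Finset.mem_range] at hk; simp only [Finset.mem_Icc]; omega
    · intro k hk; simp only [Finset.mem_Icc] at hk; simp only [Finset.mem_range]; omega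
    · intro k hk; simp only [Finset.mem_range] at hk; show N - (N - k) = k; omega
    · intro k hk; simp only [Finset.mem_Icc] at hk; show N - (N - k) = k; omega
    · intro k hk; simp only [Finset.mem_range] at hk
      rw [fw_col1]
      have hc : ((N - k : ℕ) : ℂ) = (N : ℂ) - (k : ℂ) := by
        have hk' : k ≤ N := by omega
        push_cast [Nat.cast_sub hk']; ring
      rw [hc]
      push_cast
      ring_nf
  have hp2 : (∏ k ∈ Finset.Ico j (N - 1),
      faceW q lam ω12
        (a + (M : ℤ) • e1 + (k : ℤ) • e2)
        (a + (M : ℤ) • e1 + ((k : ℤ) + 1) • e2)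
        (a + (M : ℤ) • e1 + ((k : ℤ) + 1) • e2)
        (a + (M : ℤ) • e1 + ((k : ℤ) + 2) • e2)
        (u (N - k - 1)) vM) =
      ∏ k ∈ Finset.Icc 1 (N - j - 1), brak q lam (1 - u k + vM) / brak q lam 1 := by
    refine Finset.prod_nbij' (fun k => N - k - 1) (fun k => N - k - 1) ?_ ?_ ?_ ?_ ?_
    · intro k hk; simp only [Finset.mem_Ico] at hk; simp only [Finset.mem_Icc]; omega
    · intro k hk; simp only [Finset.mem_Icc] at hk; simp only [Finset.mem_Ico]; omega
    · intro k hk; simp only [Finset.mem_Ico] at hk; show N - (N - k - 1) - 1 = k; omega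
    · intro k hk; simp only [Finset.mem_Icc] at hk; show N - (N - k - 1) - 1 = k; omega
    · intro k hk
      rw [fw_col3]
      ring_nf
  rw [hmid, hp1, hp2]
  ring

end
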